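/- Let M = (S, A, AP, L, I) be an interval Markov decision process. For every PCTL state formula φ there exists a PCTL state formula φ̄ such that for every state s ∈ S, s ⊨∃ φ if and only if s ⊨∀ φ̄. -/
import Mathlib


open scoped Classical
open MeasureTheory

structure IMDP (S A AP : Type) [Fintype S] [Fintype A] : Type where
  L : S → Set AP
  Il : S → A → S → ℝ
  Iu : S → A → S → ℝ
  Il_nonneg : ∀ s a s', 0 ≤ Il s a s'
  Il_le_Iu : ∀ s a s', Il s a s' ≤ Iu s a s'
  Iu_le_one : ∀ s a s', Iu s a s' ≤ 1
  feasible_nonempty : ∀ s a, ∃ μ : S → ℝ,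
    (∀ s', 0 ≤ μ s') ∧ (∑ s', μ s') = 1 ∧
      ∀ s', μ s' ∈ Set.Icc (Il s a s') (Iu s a s')

def IsDist {X : Type} [Fintype X] (μ : X → ℝ) : Prop :=
  (∀ x, 0 ≤ μ x) ∧ (∑ x, μ x) = 1

def Feasible {S A AP : Type} [Fintype S] [Fintype A] (M : IMDP S A AP)
    (s : S) (a : A) (μ : S → ℝ) : Prop :=
  IsDist μ ∧ ∀ s', μ s' ∈ Set.Icc (M.Il s a s') (M.Iu s a s')

noncomputable def classMass {S : Type} [Fintype S] (R : S → S → Prop)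
    (μ : S → ℝ) (c : S) : ℝ :=
  ∑ s', if R c s' then μ s' else 0

inductive Cmp : Type where
  | le : Cmp
  | lt : Cmp
  | ge : Cmp
  | gt : Cmp

def Cmp.eval : Cmp → ℝ → ℝ → Prop
  | Cmp.le, x, y => x ≤ y
  | Cmp.lt, x, y => x < y
  | Cmp.ge, x, y => y ≤ x
  | Cmp.gt, x, y => y < x

mutual
  inductive StateFormula (AP : Type) : Type where
    | tt : StateFormula AP
    | atom : AP → StateFormula AP
    | neg : StateFormula AP → StateFormula AP
    | conj : StateFormula AP → StateFormula AP → StateFormula AP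
    | prob : Cmp → (p : ℚ) → 0 ≤ p → p ≤ 1 → PathFormula AP → StateFormula AP
  inductive PathFormula (AP : Type) : Type where
    | next : StateFormula AP → PathFormula AP
    | untl : StateFormula AP → StateFormula AP → PathFormula AP
    | buntl : ℕ → StateFormula AP → StateFormula AP → PathFormula AP
end

abbrev FinPath (S : Type) : Type := {l : List S // l ≠ []}

structure Scheduler (S A : Type) [Fintype A] : Type where
  f : FinPath S → A → ℝ
  dist : ∀ ω : FinPath S, IsDist (f ω)

structure Nature {S A AP : Type} [Fintype S] [Fintype A] (M : IMDP S A AP) : Type where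
  f : FinPath S → A → S → ℝ
  feasible : ∀ (ω : FinPath S) (a : A), Feasible M (ω.1.getLast ω.2) a (f ω a)

def Cyl {S : Type} (l : List S) : Set (ℕ → S) :=
  {ρ | ∀ i : Fin l.length, ρ (i : ℕ) = l.get i}

def pathSigma (S : Type) : MeasurableSpace (ℕ → S) :=
  MeasurableSpace.generateFrom {C : Set (ℕ → S) | ∃ l : List S, l ≠ [] ∧ C = Cyl l}

def IsPathMeasure {S A AP : Type} [Fintype S] [Fintype A] (M : IMDP S A AP)
    (s : S) (σ : Scheduler S A) (π : Nature M)
    (Pr : @Measure (ℕ → S) (pathSigma S)) : Prop :=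
  IsProbabilityMeasure Pr ∧
  (∀ s' : S, Pr (Cyl [s']) = if s' = s then 1 else 0) ∧
  ∀ (l : List S) (h : l ≠ []) (s' : S),
    Pr (Cyl (l ++ [s'])) = Pr (Cyl l) *
      ENNReal.ofReal (∑ a, σ.f ⟨l, h⟩ a * π.f ⟨l, h⟩ a s')

mutual
  def SatA {S A AP : Type} [Fintype S] [Fintype A] (M : IMDP S A AP)
      (Pr : S → Scheduler S A → Nature M → @Measure (ℕ → S) (pathSigma S)) :
      StateFormula AP → S → Prop
    | StateFormula.tt, _ => True
    | StateFormula.atom x, s => x ∈ M.L s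
    | StateFormula.neg φ, s => ¬ SatA M Pr φ s
    | StateFormula.conj φ₁ φ₂, s => SatA M Pr φ₁ s ∧ SatA M Pr φ₂ s
    | StateFormula.prob c p _ _ ψ, s =>
        ∀ (σ : Scheduler S A) (π : Nature M),
          Cmp.eval c ((Pr s σ π {ρ : ℕ → S | PSatA M Pr ψ ρ}).toReal) (p : ℝ)
  def PSatA {S A AP : Type} [Fintype S] [Fintype A] (M : IMDP S A AP)
      (Pr : S → Scheduler S A → Nature M → @Measure (ℕ → S) (pathSigma S)) :
      PathFormula AP → (ℕ → S) → Prop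
    | PathFormula.next φ, ρ => SatA M Pr φ (ρ 1)
    | PathFormula.untl φ₁ φ₂, ρ => ∃ k : ℕ, ∃ i : ℕ, i < k ∧ SatA M Pr φ₂ (ρ i) ∧
        ∀ j : ℕ, j < i → SatA M Pr φ₁ (ρ j)
    | PathFormula.buntl k φ₁ φ₂, ρ => ∃ i : ℕ, i < k ∧ SatA M Pr φ₂ (ρ i) ∧
        ∀ j : ℕ, j < i → SatA M Pr φ₁ (ρ j)
end

mutual
  def SatE {S A AP : Type} [Fintype S] [Fintype A] (M : IMDP S A AP)
      (Pr : S → Scheduler S A → Nature M → @Measure (ℕ → S) (pathSigma S)) :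
      StateFormula AP → S → Prop
    | StateFormula.tt, _ => True
    | StateFormula.atom x, s => x ∈ M.L s
    | StateFormula.neg φ, s => ¬ SatE M Pr φ s
    | StateFormula.conj φ₁ φ₂, s => SatE M Pr φ₁ s ∧ SatE M Pr φ₂ s
    | StateFormula.prob c p _ _ ψ, s =>
        ∃ (σ : Scheduler S A) (π : Nature M),
          Cmp.eval c ((Pr s σ π {ρ : ℕ → S | PSatE M Pr ψ ρ}).toReal) (p : ℝ)
  def PSatE {S A AP : Type} [Fintype S] [Fintype A] (M : IMDP S A AP)
      (Pr : S → Scheduler S A → Nature M → @Measure (ℕ → S) (pathSigma S)) :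
      PathFormula AP → (ℕ → S) → Prop
    | PathFormula.next φ, ρ => SatE M Pr φ (ρ 1)
    | PathFormula.untl φ₁ φ₂, ρ => ∃ k : ℕ, ∃ i : ℕ, i < k ∧ SatE M Pr φ₂ (ρ i) ∧
        ∀ j : ℕ, j < i → SatE M Pr φ₁ (ρ j)
    | PathFormula.buntl k φ₁ φ₂, ρ => ∃ i : ℕ, i < k ∧ SatE M Pr φ₂ (ρ i) ∧
        ∀ j : ℕ, j < i → SatE M Pr φ₁ (ρ j)
end

def negCmp : Cmp → Cmp
  | Cmp.le => Cmp.gt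
  | Cmp.lt => Cmp.ge
  | Cmp.ge => Cmp.lt
  | Cmp.gt => Cmp.le

theorem negCmp_eval (c : Cmp) (x y : ℝ) : ¬ Cmp.eval c x y ↔ Cmp.eval (negCmp c) x y := by
  cases c <;> simp [Cmp.eval, negCmp, not_le, not_lt]

mutual
  def dualS {AP : Type} : StateFormula AP → StateFormula AP
    | StateFormula.tt => StateFormula.tt
    | StateFormula.atom x => StateFormula.atom x
    | StateFormula.neg φ => StateFormula.neg (dualS φ)
    | StateFormula.conj φ₁ φ₂ => StateFormula.conj (dualS φ₁) (dualS φ₂)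
    | StateFormula.prob c p h1 h2 ψ =>
        StateFormula.neg (StateFormula.prob (negCmp c) p h1 h2 (dualP ψ))
  def dualP {AP : Type} : PathFormula AP → PathFormula AP
    | PathFormula.next φ => PathFormula.next (dualS φ)
    | PathFormula.untl φ₁ φ₂ => PathFormula.untl (dualS φ₁) (dualS φ₂)
    | PathFormula.buntl k φ₁ φ₂ => PathFormula.buntl k (dualS φ₁) (dualS φ₂)
end

mutual
  theorem dualS_correct {S A AP : Type} [Fintype S] [Fintype A] (M : IMDP S A AP)
      (Pr : S → Scheduler S A → Nature M → @Measure (ℕ → S) (pathSigma S)) :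
      ∀ (φ : StateFormula AP) (s : S), SatE M Pr φ s ↔ SatA M Pr (dualS φ) s
    | StateFormula.tt, s => by simp [SatE, SatA, dualS]
    | StateFormula.atom x, s => by simp [SatE, SatA, dualS]
    | StateFormula.neg φ, s => by
        simp only [SatE, SatA, dualS]
        exact not_congr (dualS_correct M Pr φ s)
    | StateFormula.conj φ₁ φ₂, s => by
        simp only [SatE, SatA, dualS]
        exact and_congr (dualS_correct M Pr φ₁ s) (dualS_correct M Pr φ₂ s)
    | StateFormula.prob c p h1 h2 ψ, s => by
        have hset : {ρ : ℕ → S | PSatE M Pr ψ ρ} = {ρ : ℕ → S | PSatA M Pr (dualP ψ) ρ} := by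
          ext ρ
          exact dualP_correct M Pr ψ ρ
        simp only [SatE, SatA, dualS, hset]
        constructor
        · rintro ⟨σ, π, h⟩ hall
          exact (negCmp_eval c _ _).mpr (hall σ π) h
        · intro h
          by_contra hc
          push_neg at hc
          exact h (fun σ π => (negCmp_eval c _ _).mp (hc σ π))
  theorem dualP_correct {S A AP : Type} [Fintype S] [Fintype A] (M : IMDP S A AP)
      (Pr : S → Scheduler S A → Nature M → @Measure (ℕ → S) (pathSigma S)) :
      ∀ (ψ : PathFormula AP) (ρ : ℕ → S), PSatE M Pr ψ ρ ↔ PSatA M Pr (dualP ψ) ρ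
    | PathFormula.next φ, ρ => by
        simp only [PSatE, PSatA, dualP]
        exact dualS_correct M Pr φ (ρ 1)
    | PathFormula.untl φ₁ φ₂, ρ => by
        simp only [PSatE, PSatA, dualP]
        constructor
        · rintro ⟨k, i, hik, h2, h1⟩
          exact ⟨k, i, hik, (dualS_correct M Pr φ₂ _).mp h2,
            fun j hj => (dualS_correct M Pr φ₁ _).mp (h1 j hj)⟩
        · rintro ⟨k, i, hik, h2, h1⟩
          exact ⟨k, i, hik, (dualS_correct M Pr φ₂ _).mpr h2,
            fun j hj => (dualS_correct M Pr φ₁ _).mpr (h1 j hj)⟩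
    | PathFormula.buntl k φ₁ φ₂, ρ => by
        simp only [PSatE, PSatA, dualP]
        constructor
        · rintro ⟨i, hik, h2, h1⟩
          exact ⟨i, hik, (dualS_correct M Pr φ₂ _).mp h2,
            fun j hj => (dualS_correct M Pr φ₁ _).mp (h1 j hj)⟩
        · rintro ⟨i, hik, h2, h1⟩
          exact ⟨i, hik, (dualS_correct M Pr φ₂ _).mpr h2,
            fun j hj => (dualS_correct M Pr φ₁ _).mpr (h1 j hj)⟩
end

theorem stmt1 {S A AP : Type} [Fintype S] [Fintype A] (M : IMDP S A AP)
    (Pr : S → Scheduler S A → Nature M → @Measure (ℕ → S) (pathSigma S))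
    (hPr : ∀ (s : S) (σ : Scheduler S A) (π : Nature M), IsPathMeasure M s σ π (Pr s σ π)) :
    ∀ φ : StateFormula AP, ∃ φb : StateFormula AP,
      ∀ s : S, SatE M Pr φ s ↔ SatA M Pr φb s :=
  fun φ => ⟨dualS φ, dualS_correct M Pr φ⟩
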